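/- (Doubling lemma, closed-set version) Let (X, d) be a complete metric space, let D ⊆ X be closed and nonempty, let M : D → (0,∞) be bounded on compact subsets of D, and let k > 0. Then for every y ∈ D there exists x ∈ D such that M(x) ≥ M(y) and M(z) ≤ 2 M(x) for every z ∈ D with d(z, x) ≤ k / M(x). -/

import Mathlib

/-!
Suppose no such `x` exists. Then every `z ∈ D` with `M y ≤ M z` has a neighbour `g z ∈ D` with
`dist (g z) z ≤ k / M z` and `2 * M z < M (g z)`. Along the orbit of `y` under `g` the values of `M`
at least double while the steps are bounded by `k / (2 ^ n * M y)`, so the orbit is Cauchy and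
converges in the closed set `D`. The orbit together with its limit is then a compact subset of `D`
on which `M` is unbounded.
-/

open Filter Set

lemma two_pow_mul_le_of_two_mul_le {a : ℕ → ℝ} (ha : ∀ n, 2 * a n ≤ a (n + 1)) (n : ℕ) :
    2 ^ n * a 0 ≤ a n := by
  induction n with
  | zero => simp
  | succ n ih =>
    calc 2 ^ (n + 1) * a 0 = 2 * (2 ^ n * a 0) := by ring
      _ ≤ 2 * a n := by gcongr
      _ ≤ a (n + 1) := ha n

lemma not_bddAbove_of_two_mul_le {a : ℕ → ℝ} (ha0 : 0 < a 0) (ha : ∀ n, 2 * a n ≤ a (n + 1)) :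
    ¬BddAbove (range a) :=
  not_bddAbove_of_tendsto_atTop <| tendsto_atTop_mono (two_pow_mul_le_of_two_mul_le ha) <|
    (tendsto_pow_atTop_atTop_of_one_lt one_lt_two).atTop_mul_const ha0

lemma cauchySeq_of_dist_succ_le_div {X : Type*} [PseudoMetricSpace X] {u : ℕ → X} {a : ℕ → ℝ}
    {k : ℝ} (hk : 0 ≤ k) (ha0 : 0 < a 0) (ha : ∀ n, 2 * a n ≤ a (n + 1))
    (hu : ∀ n, dist (u n) (u (n + 1)) ≤ k / a n) : CauchySeq u := by
  refine cauchySeq_of_le_geometric (1 / 2) (k / a 0) (by norm_num) fun n => ?_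
  calc dist (u n) (u (n + 1)) ≤ k / a n := hu n
    _ ≤ k / (2 ^ n * a 0) := by
      gcongr
      exact two_pow_mul_le_of_two_mul_le ha n
    _ = k / a 0 * (1 / 2) ^ n := by rw [one_div_pow, div_mul_div_comm, mul_one, mul_comm]

lemma IsClosed.bddAbove_range_comp_of_cauchySeq {X : Type*} [MetricSpace X] [CompleteSpace X]
    {D : Set X} (hD : IsClosed D) {M : X → ℝ}
    (hMbdd : ∀ K ⊆ D, IsCompact K → ∃ C : ℝ, ∀ z ∈ K, M z ≤ C)
    {u : ℕ → X} (huD : ∀ n, u n ∈ D) (hu : CauchySeq u) : BddAbove (range (M ∘ u)) := by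
  obtain ⟨x, hx⟩ := cauchySeq_tendsto_of_complete hu
  have hxD : x ∈ D := hD.mem_of_tendsto hx (Eventually.of_forall huD)
  have hKD : insert x (range u) ⊆ D := insert_subset hxD (range_subset_iff.2 huD)
  obtain ⟨C, hC⟩ := hMbdd _ hKD hx.isCompact_insert_range
  exact ⟨C, forall_mem_range.2 fun n => hC _ (mem_insert_of_mem _ (mem_range_self n))⟩

theorem stmt14_general {X : Type*} [MetricSpace X] [CompleteSpace X]
    (D : Set X) (hD : IsClosed D)
    (M : X → ℝ) (hMpos : ∀ z ∈ D, 0 < M z)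
    (hMbdd : ∀ K ⊆ D, IsCompact K → ∃ C : ℝ, ∀ z ∈ K, M z ≤ C)
    (k : ℝ) (hk : 0 < k) :
    ∀ y ∈ D, ∃ x ∈ D, M y ≤ M x ∧ ∀ z ∈ D, dist z x ≤ k / M x → M z ≤ 2 * M x := by
  intro y hy
  by_contra! hcon
  choose! g hgD hgdist hglt using hcon
  have hgS : MapsTo g {z | z ∈ D ∧ M y ≤ M z} {z | z ∈ D ∧ M y ≤ M z} := fun z ⟨hzD, hz⟩ =>
    ⟨hgD z hzD hz, by linarith [hglt z hzD hz, hMpos z hzD]⟩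
  set u : ℕ → X := fun n => g^[n] y
  have huS (n : ℕ) : u n ∈ D ∧ M y ≤ M (u n) := hgS.iterate n ⟨hy, le_rfl⟩
  have hu_succ (n : ℕ) : u (n + 1) = g (u n) := Function.iterate_succ_apply' g n y
  have hMu (n : ℕ) : 2 * (M ∘ u) n ≤ (M ∘ u) (n + 1) := by
    simpa only [Function.comp_apply, hu_succ] using (hglt _ (huS n).1 (huS n).2).le
  have hu : CauchySeq u := cauchySeq_of_dist_succ_le_div hk.le (hMpos y hy) hMu fun n => by
    simpa only [dist_comm, hu_succ, Function.comp_apply] using hgdist _ (huS n).1 (huS n).2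
  exact not_bddAbove_of_two_mul_le (hMpos y hy) hMu <|
    hD.bddAbove_range_comp_of_cauchySeq hMbdd (fun n => (huS n).1) hu

theorem stmt14 {X : Type*} [MetricSpace X] [CompleteSpace X]
    (D : Set X) (hD : IsClosed D) (hDne : D.Nonempty)
    (M : X → ℝ) (hMpos : ∀ z ∈ D, 0 < M z)
    (hMbdd : ∀ K ⊆ D, IsCompact K → ∃ C : ℝ, ∀ z ∈ K, M z ≤ C)
    (k : ℝ) (hk : 0 < k) :
    ∀ y ∈ D, ∃ x ∈ D, M y ≤ M x ∧ ∀ z ∈ D, dist z x ≤ k / M x → M z ≤ 2 * M x :=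
  stmt14_general D hD M hMpos hMbdd k hk
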